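/- Let y1, y2 be distinct points in R^d and let Y be a finite nontrivial minimal obstacle between y1 and y2. Then for any point x ∈ R^d, either y1 ∉ conv(Y ∪ {x}) or y2 ∉ conv(Y ∪ {x}). -/

import Mathlib

/-!
Suppose y₁, y₂ ∈ conv (Y ∪ {x}). Since yᵢ ∉ conv Y, we can write yᵢ = aᵢ x + (1 - aᵢ) cᵢ with
aᵢ > 0 and cᵢ ∈ conv Y. A point of conv Y on the segment [y₁, y₂] then exhibits x as an affine
combination of points of conv Y, so x, and with it y₁ and y₂, lies in the affine hull of Y.
By minimality every point of conv Y ∩ [y₁, y₂] has strictly positive barycentric weights, so it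
can slide a little both ways along the segment, whose direction lies in the direction of that
affine hull. The parameters of [y₁, y₂] landing in conv Y thus form a nonempty clopen proper
subset of ℝ.
-/

open Finset Filter Topology

variable {E : Type*} [AddCommGroup E] [Module ℝ E]

theorem Finset.exists_sum_smul_eq_of_mem_affineSpan {Y : Finset E} {z : E}
    (hz : z ∈ affineSpan ℝ (Y : Set E)) :
    ∃ u : E → ℝ, ∑ y ∈ Y, u y = 1 ∧ ∑ y ∈ Y, u y • y = z := by
  classical
  obtain ⟨s, w, hsY, hw, rfl⟩ :=
    eq_affineCombination_of_mem_affineSpan_image (p := id) (s := (Y : Set E)) (by simpa using hz)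
  have hsY' : s ⊆ Y := by exact_mod_cast hsY
  refine ⟨Set.indicator s w, by rwa [sum_indicator_subset _ hsY'], ?_⟩
  calc ∑ y ∈ Y, Set.indicator s w y • y = ∑ y ∈ Y, Set.indicator s (fun y => w y • y) y :=
        sum_congr rfl fun y _ => (Set.indicator_smul_apply_left _ _ id y).symm
    _ = s.affineCombination ℝ id w := by
      rw [sum_indicator_subset _ hsY', affineCombination_eq_linear_combination _ _ _ hw]
      rfl

theorem Finset.exists_pos_weights_of_forall_notMem_convexHull_erase [DecidableEq E]
    {Y : Finset E} {q : E}
    (hq : q ∈ convexHull ℝ (Y : Set E)) (hmin : ∀ y ∈ Y, q ∉ convexHull ℝ (Y.erase y : Set E)) :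
    ∃ w : E → ℝ, (∀ y ∈ Y, 0 < w y) ∧ ∑ y ∈ Y, w y = 1 ∧ ∑ y ∈ Y, w y • y = q := by
  obtain ⟨w, hw0, hw1, hwq⟩ := mem_convexHull'.1 hq
  refine ⟨w, fun y hy => (hw0 y hy).lt_of_ne fun hwy => hmin y hy ?_, hw1, hwq⟩
  refine mem_convexHull'.2 ⟨w, fun z hz => hw0 z (mem_of_mem_erase hz), ?_, ?_⟩
  · rwa [sum_erase _ hwy.symm]
  · rwa [sum_erase _ (by rw [← hwy, zero_smul])]

theorem Finset.eventually_add_smul_sub_mem_convexHull {Y : Finset E} {w : E → ℝ}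
    (hw0 : ∀ y ∈ Y, 0 < w y) (hw1 : ∑ y ∈ Y, w y = 1) {z₁ z₂ : E}
    (hz₁ : z₁ ∈ affineSpan ℝ (Y : Set E)) (hz₂ : z₂ ∈ affineSpan ℝ (Y : Set E)) :
    ∀ᶠ r in 𝓝 (0 : ℝ), ∑ y ∈ Y, w y • y + r • (z₂ - z₁) ∈ convexHull ℝ (Y : Set E) := by
  obtain ⟨u₁, hu₁, rfl⟩ := exists_sum_smul_eq_of_mem_affineSpan hz₁
  obtain ⟨u₂, hu₂, rfl⟩ := exists_sum_smul_eq_of_mem_affineSpan hz₂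
  have hpos : ∀ᶠ r in 𝓝 (0 : ℝ), ∀ y ∈ Y, 0 < w y + r * (u₂ y - u₁ y) :=
    (eventually_all_finset Y).2 fun y hy =>
      ((continuous_const.add (continuous_id.mul continuous_const)).tendsto 0).eventually
        (lt_mem_nhds (by simpa using hw0 y hy))
  filter_upwards [hpos] with r hr
  refine mem_convexHull'.2 ⟨fun y => w y + r * (u₂ y - u₁ y), fun y hy => (hr y hy).le, ?_, ?_⟩
  · simp [sum_add_distrib, ← mul_sum, sum_sub_distrib, hw1, hu₁, hu₂]
  · simp only [add_smul, mul_smul, sub_smul, sum_add_distrib, ← smul_sum, sum_sub_distrib,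
      smul_sub]

theorem exists_pos_smul_add_eq_of_mem_convexHull_insert {S : Set E} {x y : E} (hS : S.Nonempty)
    (hy : y ∈ convexHull ℝ (insert x S)) (hyS : y ∉ convexHull ℝ S) :
    ∃ (a : ℝ) (c : E), 0 < a ∧ c ∈ convexHull ℝ S ∧ a • x + (1 - a) • c = y := by
  rw [convexHull_insert hS, mem_convexJoin] at hy
  obtain ⟨_, rfl, c, hc, a, b, ha, hb, hab, rfl⟩ := hy
  obtain rfl : b = 1 - a := by linarith
  refine ⟨a, c, ha.lt_of_ne ?_, hc, rfl⟩
  rintro rfl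
  exact hyS (by simpa using hc)

theorem AffineSubspace.mem_of_mem_segment_smul_add {A : AffineSubspace ℝ E} {x c₁ c₂ p : E}
    {a₁ a₂ : ℝ} (ha₁ : 0 < a₁) (ha₂ : 0 < a₂) (hc₁ : c₁ ∈ A) (hc₂ : c₂ ∈ A) (hp : p ∈ A)
    (hseg : p ∈ segment ℝ (a₁ • x + (1 - a₁) • c₁) (a₂ • x + (1 - a₂) • c₂)) : x ∈ A := by
  obtain ⟨l, m, hl, hm, hlm, hp_eq⟩ := hseg
  have ht : 0 < l * a₁ + m * a₂ := convex_Ioi (0 : ℝ) ha₁ ha₂ hl hm hlm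
  have hdir : (l * a₁ + m * a₂) • (x - p) ∈ A.direction := by
    have : (l * a₁ + m * a₂) • (x - p) =
        (l * (1 - a₁)) • (p - c₁) + (m * (1 - a₂)) • (p - c₂) := by
      obtain rfl : m = 1 - l := by linarith
      subst hp_eq
      module
    rw [this]
    exact add_mem (Submodule.smul_mem _ _ (vsub_mem_direction hp hc₁))
      (Submodule.smul_mem _ _ (vsub_mem_direction hp hc₂))
  rw [← vsub_vadd x p]
  exact vadd_mem_of_mem_direction ((Submodule.smul_mem_iff _ ht.ne').1 hdir) hp

variable [TopologicalSpace E] [IsTopologicalAddGroup E] [ContinuousSMul ℝ E] [T2Space E]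

theorem Finset.convexHull_inter_convexHull_pair_eq_empty_of_mem_affineSpan [DecidableEq E]
    {Y : Finset E} {y₁ y₂ : E}
    (h₁ : y₁ ∉ convexHull ℝ (Y : Set E)) (h₂ : y₂ ∉ convexHull ℝ (Y : Set E))
    (hmin : ∀ y ∈ Y, convexHull ℝ (Y.erase y : Set E) ∩ convexHull ℝ {y₁, y₂} = ∅)
    (hy₁ : y₁ ∈ affineSpan ℝ (Y : Set E)) (hy₂ : y₂ ∈ affineSpan ℝ (Y : Set E)) :
    convexHull ℝ (Y : Set E) ∩ convexHull ℝ {y₁, y₂} = ∅ := by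
  set g : ℝ → E := fun s => (1 - s) • y₁ + s • y₂
  have hpair : convexHull ℝ {y₁, y₂} = g '' Set.Icc 0 1 := by
    rw [convexHull_pair, segment_eq_image]
  set S := Set.Icc (0 : ℝ) 1 ∩ g ⁻¹' convexHull ℝ (Y : Set E)
  have hS_closed : IsClosed S :=
    isClosed_Icc.inter ((Y.finite_toSet.isClosed_convexHull ℝ).preimage (by fun_prop))
  have hS_open : IsOpen S := by
    refine isOpen_iff_mem_nhds.2 fun s ⟨hs, hsY⟩ => ?_
    have hs₀ : 0 < s := hs.1.lt_of_ne <| by rintro rfl; exact h₁ (by simpa [g] using hsY)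
    have hs₁ : s < 1 := hs.2.lt_of_ne <| by rintro rfl; exact h₂ (by simpa [g] using hsY)
    obtain ⟨w, hw0, hw1, hwg⟩ := exists_pos_weights_of_forall_notMem_convexHull_erase hsY
      fun y hy hgs => (hmin y hy).subset ⟨hgs, hpair ▸ Set.mem_image_of_mem g hs⟩
    have hshift : Tendsto (fun s' => s' - s) (𝓝 s) (𝓝 0) := tendsto_sub_nhds_zero_iff.2 tendsto_id
    filter_upwards [Ioo_mem_nhds hs₀ hs₁,
      hshift.eventually (eventually_add_smul_sub_mem_convexHull hw0 hw1 hy₁ hy₂)] with s' hs' hs'Y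
    refine ⟨Set.Ioo_subset_Icc_self hs', ?_⟩
    have hgs' : g s' = ∑ y ∈ Y, w y • y + (s' - s) • (y₂ - y₁) := by
      simp only [hwg, g]
      module
    rwa [Set.mem_preimage, hgs']
  rw [hpair, Set.eq_empty_iff_forall_notMem]
  rintro _ ⟨hgY, s, hs, rfl⟩
  rcases isClopen_iff.1 ⟨hS_closed, hS_open⟩ with hS | hS
  · exact hS.subset ⟨hs, hgY⟩
  · have h₂S : (2 : ℝ) ∈ S := hS ▸ Set.mem_univ 2
    exact absurd h₂S.1.2 (by norm_num)

theorem stmt_6_general (d : ℕ) (y1 y2 : Fin d → ℝ) (Y : Finset (Fin d → ℝ))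
    (hobs : (convexHull ℝ (Y : Set (Fin d → ℝ)) ∩ convexHull ℝ ({y1, y2} : Set (Fin d → ℝ))).Nonempty)
    (h1 : y1 ∉ convexHull ℝ (Y : Set (Fin d → ℝ)))
    (h2 : y2 ∉ convexHull ℝ (Y : Set (Fin d → ℝ)))
    (hmin : ∀ y ∈ Y,
      convexHull ℝ ((Y.erase y : Finset (Fin d → ℝ)) : Set (Fin d → ℝ)) ∩
        convexHull ℝ ({y1, y2} : Set (Fin d → ℝ)) = ∅) :
    ∀ x : Fin d → ℝ,
      y1 ∉ convexHull ℝ (insert x (Y : Set (Fin d → ℝ))) ∨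
      y2 ∉ convexHull ℝ (insert x (Y : Set (Fin d → ℝ))) := by
  intro x
  by_contra! hx
  obtain ⟨p, hpY, hpseg⟩ := hobs
  have hYne : (Y : Set (Fin d → ℝ)).Nonempty := convexHull_nonempty_iff.1 ⟨p, hpY⟩
  obtain ⟨a₁, c₁, ha₁, hc₁, hy₁⟩ := exists_pos_smul_add_eq_of_mem_convexHull_insert hYne hx.1 h1
  obtain ⟨a₂, c₂, ha₂, hc₂, hy₂⟩ := exists_pos_smul_add_eq_of_mem_convexHull_insert hYne hx.2 h2
  have hA := convexHull_subset_affineSpan (𝕜 := ℝ) (Y : Set (Fin d → ℝ))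
  have hxA : x ∈ affineSpan ℝ (Y : Set (Fin d → ℝ)) :=
    AffineSubspace.mem_of_mem_segment_smul_add ha₁ ha₂ (hA hc₁) (hA hc₂) (hA hpY)
      (by rwa [hy₁, hy₂, ← convexHull_pair])
  have hyA : convexHull ℝ (insert x (Y : Set (Fin d → ℝ))) ⊆ affineSpan ℝ (Y : Set (Fin d → ℝ)) :=
    affineSpan_insert_eq_affineSpan ℝ hxA ▸ convexHull_subset_affineSpan _
  exact (Y.convexHull_inter_convexHull_pair_eq_empty_of_mem_affineSpan h1 h2 hmin
    (hyA hx.1) (hyA hx.2)).subset ⟨hpY, hpseg⟩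

/-- Adding any point to a nontrivial minimal obstacle leaves at least one of
the two endpoints outside the convex hull. -/
theorem stmt_6 (d : ℕ) (y1 y2 : Fin d → ℝ) (hne : y1 ≠ y2) (Y : Finset (Fin d → ℝ))
    (hobs : (convexHull ℝ (Y : Set (Fin d → ℝ)) ∩ convexHull ℝ ({y1, y2} : Set (Fin d → ℝ))).Nonempty)
    (h1 : y1 ∉ convexHull ℝ (Y : Set (Fin d → ℝ)))
    (h2 : y2 ∉ convexHull ℝ (Y : Set (Fin d → ℝ)))
    (hmin : ∀ y ∈ Y,
      convexHull ℝ ((Y.erase y : Finset (Fin d → ℝ)) : Set (Fin d → ℝ)) ∩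
        convexHull ℝ ({y1, y2} : Set (Fin d → ℝ)) = ∅) :
    ∀ x : Fin d → ℝ,
      y1 ∉ convexHull ℝ (insert x (Y : Set (Fin d → ℝ))) ∨
      y2 ∉ convexHull ℝ (insert x (Y : Set (Fin d → ℝ))) :=
  stmt_6_general d y1 y2 Y hobs h1 h2 hmin
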